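/- Suppose (t_k)_{k≥1} is a sequence in (0,1] with t_{k+1} ≤ c · t_k for some constant 0 < c < 1 (exponential decay). Then sup_{y ≥ 0} ∑_{k≥1} t_k y / (t_k² + y²) < ∞. -/

import Mathlib

/-!
With `s k = t k / y`, each term is at most `min (s k) (s k)⁻¹`, and `s` still decays geometrically.
Split the sum at the first index `N` with `s N ≤ 1`: past `N` the terms are bounded by `s (N + j) ≤ c ^ j`,
before `N` by `(s (N - 1 - j))⁻¹ ≤ c ^ j / s (N - 1) < c ^ j`. Each part is at most `(1 - c)⁻¹`.
-/

open Finset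

lemma mul_div_sq_add_sq_le_div {t y : ℝ} (ht : 0 ≤ t) (hy : 0 < y) :
    t * y / (t ^ 2 + y ^ 2) ≤ t / y := by
  rw [div_le_div_iff₀ (by positivity) hy]
  nlinarith [pow_nonneg ht 3]

lemma mul_div_sq_add_sq_le_div' {t y : ℝ} (ht : 0 < t) (hy : 0 ≤ y) :
    t * y / (t ^ 2 + y ^ 2) ≤ y / t := by
  rw [mul_comm, add_comm]
  exact mul_div_sq_add_sq_le_div hy ht

lemma sum_range_le_of_le_pow_reflect {f : ℕ → ℝ} {c : ℝ} (hc0 : 0 ≤ c) (hc1 : c < 1) {N : ℕ}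
    (hf : ∀ j < N, f (N - 1 - j) ≤ c ^ j) : ∑ k ∈ range N, f k ≤ (1 - c)⁻¹ := by
  rw [← sum_range_reflect]
  calc ∑ j ∈ range N, f (N - 1 - j) ≤ ∑ j ∈ range N, c ^ j :=
        sum_le_sum fun j hj => hf j (mem_range.mp hj)
    _ ≤ ∑' j, c ^ j :=
        (summable_geometric_of_lt_one hc0 hc1).sum_le_tsum _ fun j _ => pow_nonneg hc0 j
    _ = (1 - c)⁻¹ := tsum_geometric_of_lt_one hc0 hc1

theorem tsum_le_two_div_of_le_min_inv {s f : ℕ → ℝ} {c : ℝ} (hc0 : 0 ≤ c) (hc1 : c < 1)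
    (hdec : ∀ k, s (k + 1) ≤ c * s k) (hf0 : ∀ k, 0 ≤ f k) (hfs : ∀ k, f k ≤ s k)
    (hfs_inv : ∀ k, f k ≤ (s k)⁻¹) : ∑' k, f k ≤ 2 / (1 - c) := by
  have decay (k n : ℕ) : s (k + n) ≤ c ^ n * s k :=
    le_geom (u := fun n => s (k + n)) hc0 n fun j _ => hdec (k + j)
  have hgeom := summable_geometric_of_lt_one hc0 hc1
  have hsum : Summable f := (hgeom.mul_right (s 0)).of_nonneg_of_le hf0 fun k =>
    (hfs k).trans (by simpa using decay 0 k)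
  have hex : ∃ N, s N ≤ 1 := by
    obtain ⟨N, hN⟩ := ((hgeom.mul_right (s 0)).tendsto_atTop_zero.eventually_le_const
      one_pos).exists
    exact ⟨N, by simpa using (decay 0 N).trans hN⟩
  set N := Nat.find hex
  have head : ∑ k ∈ range N, f k ≤ (1 - c)⁻¹ := by
    refine sum_range_le_of_le_pow_reflect hc0 hc1 fun j hj => (hfs_inv _).trans ?_
    have hbig (m : ℕ) (hm : m < N) : 1 < s m := lt_of_not_ge (Nat.find_min hex hm)
    have hlast : s (N - 1) ≤ c ^ j * s (N - 1 - j) := by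
      simpa [show N - 1 - j + j = N - 1 by omega] using decay (N - 1 - j) j
    rw [inv_le_iff_one_le_mul₀ (by linarith [hbig (N - 1 - j) (by omega)])]
    linarith [hbig (N - 1) (by omega)]
  have tail : ∑' j, f (j + N) ≤ (1 - c)⁻¹ := by
    rw [← tsum_geometric_of_lt_one hc0 hc1]
    refine ((summable_nat_add_iff N).mpr hsum).tsum_le_tsum (fun j => ?_) hgeom
    calc f (j + N) ≤ s (N + j) := add_comm j N ▸ hfs _
      _ ≤ c ^ j * s N := decay N j
      _ ≤ c ^ j := mul_le_of_le_one_right (pow_nonneg hc0 j) (Nat.find_spec hex)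
  rw [← hsum.sum_add_tsum_nat_add N]
  linarith [show 2 / (1 - c) = (1 - c)⁻¹ + (1 - c)⁻¹ by ring]

theorem stmt_7 (t : ℕ → ℝ) (c : ℝ) (hc0 : 0 < c) (hc1 : c < 1)
    (ht : ∀ k, 0 < t k ∧ t k ≤ 1) (hdec : ∀ k, t (k + 1) ≤ c * t k) :
    ∃ C : ℝ, ∀ y : ℝ, 0 ≤ y →
      ∑' k : ℕ, t k * y / ((t k)^2 + y^2) ≤ C := by
  refine ⟨2 / (1 - c), fun y hy => ?_⟩
  rcases hy.eq_or_lt with rfl | hy_pos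
  · simp only [mul_zero, zero_div, tsum_zero]
    exact div_nonneg zero_le_two (by linarith)
  refine tsum_le_two_div_of_le_min_inv (s := fun k => t k / y) hc0.le hc1 (fun k => ?_)
    (fun k => by have := (ht k).1; positivity)
    (fun k => mul_div_sq_add_sq_le_div (ht k).1.le hy_pos)
    (fun k => by simpa only [inv_div] using mul_div_sq_add_sq_le_div' (ht k).1 hy)
  rw [← mul_div_assoc]
  exact div_le_div_of_nonneg_right (hdec k) hy_pos.le
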